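/- arXiv:1708.05862 — 2 statements merged into one kernel-verified Lean document; each statement's English description precedes it below -/
import Mathlib

section
/- Let A, B, X be n×n complex matrices and let f₁, f₂, g₁, g₂ : [0,∞) → [0,∞) be continuous functions satisfying f₁(t)f₂(t) = t and g₁(t)g₂(t) = t for all t ≥ 0. Then ‖A X B*‖² ≤ ‖f₁(A*A) X g₁(B*B)‖ · ‖f₂(A*A) X g₂(B*B)‖. -/
/-!
Write `P = A*A = f₂(P) f₁(P)` and `Q = B*B = g₁(Q) g₂(Q)`. In a C*-algebra `‖M‖²` is the spectral
radius of `M*M`, and `r(uv) = r(vu)`. For `M = AXB*` this moves the factors around: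
`r(B X* f₂(P) · f₁(P) X B*) = r(f₁(P) X Q X* f₂(P)) = r(C D*)` with `C = f₁(P) X g₁(Q)` and
`D = f₂(P) X g₂(Q)`, and `r(C D*) ≤ ‖C‖ ‖D‖`.
-/

open scoped ENNReal Matrix Matrix.Norms.L2Operator

lemma spectralRadius_eq_iSup_diff_zero {𝕜 A : Type*} [NormedField 𝕜] [Ring A] [Algebra 𝕜 A]
    (a : A) : spectralRadius 𝕜 a = ⨆ k ∈ spectrum 𝕜 a \ {0}, (‖k‖₊ : ℝ≥0∞) := by
  refine le_antisymm (iSup₂_le fun k hk => ?_) (biSup_mono fun _ hk => hk.1)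
  rcases eq_or_ne k 0 with rfl | hk0
  · simp
  · exact le_iSup₂ (f := fun k (_ : k ∈ spectrum 𝕜 a \ {0}) => (‖k‖₊ : ℝ≥0∞)) k ⟨hk, hk0⟩

lemma spectralRadius_mul_comm {𝕜 A : Type*} [NormedField 𝕜] [Ring A] [Algebra 𝕜 A]
    (a b : A) : spectralRadius 𝕜 (a * b) = spectralRadius 𝕜 (b * a) := by
  rw [spectralRadius_eq_iSup_diff_zero, spectralRadius_eq_iSup_diff_zero (b * a),
    spectrum.nonzero_mul_comm]

lemma CStarAlgebra.norm_sq_le_of_star_mul_self_eq_mul {A : Type*} [CStarAlgebra A]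
    {m u v : A} (h : star m * m = u * v) : ‖m‖ ^ 2 ≤ ‖v * u‖ := by
  cases subsingleton_or_nontrivial A
  · simp [Subsingleton.elim m 0]
  rw [← CStarAlgebra.toReal_spectralRadius_star_mul_self_eq_norm_sq, h, spectralRadius_mul_comm]
  exact ENNReal.toReal_le_of_le_ofReal (norm_nonneg _)
    ((spectrum.spectralRadius_le_nnnorm (v * u)).trans_eq (ofReal_norm _).symm)

lemma cfc_mul_cfc_eq_self {A : Type*} [Ring A] [StarRing A] [Algebra ℝ A] [TopologicalSpace A]
    [ContinuousFunctionalCalculus ℝ A IsSelfAdjoint] {f g : ℝ → ℝ} {a : A}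
    (hf : ContinuousOn f (spectrum ℝ a)) (hg : ContinuousOn g (spectrum ℝ a))
    (hfg : ∀ t ∈ spectrum ℝ a, f t * g t = t) (ha : IsSelfAdjoint a := by cfc_tac) :
    cfc f a * cfc g a = a := by
  rw [← cfc_mul f g a, cfc_congr hfg, cfc_id' ℝ a]

theorem CStarAlgebra.norm_mul_mul_star_sq_le {A : Type*} [CStarAlgebra A] (a b x : A)
    {f₁ f₂ g₁ g₂ : ℝ → ℝ}
    (hf₁ : ContinuousOn f₁ (spectrum ℝ (star a * a)))
    (hf₂ : ContinuousOn f₂ (spectrum ℝ (star a * a)))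
    (hg₁ : ContinuousOn g₁ (spectrum ℝ (star b * b)))
    (hg₂ : ContinuousOn g₂ (spectrum ℝ (star b * b)))
    (hf : ∀ t ∈ spectrum ℝ (star a * a), f₁ t * f₂ t = t)
    (hg : ∀ t ∈ spectrum ℝ (star b * b), g₁ t * g₂ t = t) :
    ‖a * x * star b‖ ^ 2 ≤
      ‖cfc f₁ (star a * a) * x * cfc g₁ (star b * b)‖ *
        ‖cfc f₂ (star a * a) * x * cfc g₂ (star b * b)‖ := by
  set P := star a * a
  set Q := star b * b
  have hP : cfc f₂ P * cfc f₁ P = P :=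
    cfc_mul_cfc_eq_self hf₂ hf₁ fun t ht => (mul_comm _ _).trans (hf t ht)
  have hQ : cfc g₁ Q * cfc g₂ Q = Q := cfc_mul_cfc_eq_self hg₁ hg₂ hg
  have hstar : star (cfc f₂ P * x * cfc g₂ Q) = cfc g₂ Q * star x * cfc f₂ P := by
    simp only [star_mul, (cfc_predicate f₂ P).star_eq, (cfc_predicate g₂ Q).star_eq, mul_assoc]
  have hfactor : star (a * x * star b) * (a * x * star b)
      = (b * star x * cfc f₂ P) * (cfc f₁ P * x * star b) := by
    calc star (a * x * star b) * (a * x * star b) = b * star x * P * x * star b := by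
          simp only [star_mul, star_star, P, mul_assoc]
      _ = b * star x * (cfc f₂ P * cfc f₁ P) * x * star b := by rw [hP]
      _ = _ := by simp only [mul_assoc]
  calc ‖a * x * star b‖ ^ 2 ≤ ‖cfc f₁ P * x * star b * (b * star x * cfc f₂ P)‖ :=
        CStarAlgebra.norm_sq_le_of_star_mul_self_eq_mul hfactor
    _ = ‖cfc f₁ P * x * Q * star x * cfc f₂ P‖ := by simp only [Q, mul_assoc]
    _ = ‖cfc f₁ P * x * (cfc g₁ Q * cfc g₂ Q) * star x * cfc f₂ P‖ := by rw [hQ]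
    _ = ‖cfc f₁ P * x * cfc g₁ Q * star (cfc f₂ P * x * cfc g₂ Q)‖ := by
        rw [hstar]; simp only [mul_assoc]
    _ ≤ _ := (norm_mul_le _ _).trans_eq (by rw [norm_star])

theorem stmt_0_general {d : ℕ} (A B X : Matrix (Fin d) (Fin d) ℂ)
    (f₁ f₂ g₁ g₂ : ℝ → ℝ)
    (hf₁ : ContinuousOn f₁ (Set.Ici 0)) (hf₂ : ContinuousOn f₂ (Set.Ici 0))
    (hg₁ : ContinuousOn g₁ (Set.Ici 0)) (hg₂ : ContinuousOn g₂ (Set.Ici 0))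
    (hf : ∀ t ∈ Set.Ici (0 : ℝ), f₁ t * f₂ t = t)
    (hg : ∀ t ∈ Set.Ici (0 : ℝ), g₁ t * g₂ t = t) :
    ‖A * X * Bᴴ‖ ^ 2 ≤
      ‖cfc f₁ (Aᴴ * A) * X * cfc g₁ (Bᴴ * B)‖ * ‖cfc f₂ (Aᴴ * A) * X * cfc g₂ (Bᴴ * B)‖ := by
  have hA : spectrum ℝ (star A * A) ⊆ Set.Ici 0 := spectrum_star_mul_self_nonneg
  have hB : spectrum ℝ (star B * B) ⊆ Set.Ici 0 := spectrum_star_mul_self_nonneg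
  exact CStarAlgebra.norm_mul_mul_star_sq_le A B X (hf₁.mono hA) (hf₂.mono hA) (hg₁.mono hB)
    (hg₂.mono hB) (fun t ht => hf t (hA ht)) (fun t ht => hg t (hB ht))

/-- **Theorem 2.1.** For `n × n` complex matrices `A, B, X` and non-negative continuous
functions `f₁, f₂, g₁, g₂` on `[0, ∞)` with `f₁ t * f₂ t = t` and `g₁ t * g₂ t = t`,
the operator norm satisfies
`‖A X B*‖² ≤ ‖f₁(A*A) X g₁(B*B)‖ * ‖f₂(A*A) X g₂(B*B)‖`. -/
theorem stmt_0 {d : ℕ} (A B X : Matrix (Fin d) (Fin d) ℂ)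
    (f₁ f₂ g₁ g₂ : ℝ → ℝ)
    (hf₁ : ContinuousOn f₁ (Set.Ici 0)) (hf₂ : ContinuousOn f₂ (Set.Ici 0))
    (hg₁ : ContinuousOn g₁ (Set.Ici 0)) (hg₂ : ContinuousOn g₂ (Set.Ici 0))
    (hf₁0 : ∀ t ∈ Set.Ici (0 : ℝ), 0 ≤ f₁ t) (hf₂0 : ∀ t ∈ Set.Ici (0 : ℝ), 0 ≤ f₂ t)
    (hg₁0 : ∀ t ∈ Set.Ici (0 : ℝ), 0 ≤ g₁ t) (hg₂0 : ∀ t ∈ Set.Ici (0 : ℝ), 0 ≤ g₂ t)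
    (hf : ∀ t ∈ Set.Ici (0 : ℝ), f₁ t * f₂ t = t)
    (hg : ∀ t ∈ Set.Ici (0 : ℝ), g₁ t * g₂ t = t) :
    ‖A * X * Bᴴ‖ ^ 2 ≤
      ‖cfc f₁ (Aᴴ * A) * X * cfc g₁ (Bᴴ * B)‖ * ‖cfc f₂ (Aᴴ * A) * X * cfc g₂ (Bᴴ * B)‖ :=
  stmt_0_general A B X f₁ f₂ g₁ g₂ hf₁ hf₂ hg₁ hg₂ hf hg
end

section
/- Let A, B, X be n×n complex matrices with A and B invertible, let m, n, s, t be real numbers with m + n = 1 and s + t = 1, and let |||·||| be a unitarily invariant norm on n×n complex matrices. Then |||A X B*|||² ≤ |||(A*A)^m X (B*B)^s||| · |||(A*A)^n X (B*B)^t|||. -/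
/-!
Hadamard's three-lines theorem. Writing `P = AᴴA`, `Q = BᴴB` and using the polar decompositions
`A = U P^{1/2}`, `B = V Q^{1/2}`, the left-hand side is `N (P^{1/2} X Q^{1/2}) ^ 2`. The entire
function `F z = P^{m + z (n - m)} X Q^{s + z (t - s)}` takes the values `P^m X Q^s`,
`P^{1/2} X Q^{1/2}` and `P^n X Q^t` at `z = 0, 1/2, 1`, and since the imaginary powers of `P` and
`Q` are unitary, `N (F z)` only depends on `re z`. Hence `N ∘ F` is bounded on the strip
`0 ≤ re z ≤ 1`, and the three-lines theorem makes it log-convex along `[0, 1]`.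
-/

open Complex HadamardThreeLines in
theorem norm_sq_half_le_of_norm_eq_norm_re {E : Type*} [NormedAddCommGroup E] [NormedSpace ℂ E]
    {f : ℂ → E} (hf : Differentiable ℂ f) (hre : ∀ z, ‖f z‖ = ‖f z.re‖) :
    ‖f (1 / 2)‖ ^ 2 ≤ ‖f 0‖ * ‖f 1‖ := by
  have hbdd : BddAbove ((norm ∘ f) '' verticalClosedStrip 0 1) := by
    refine ((isCompact_Icc (a := (0 : ℝ)) (b := 1)).image
      (hf.continuous.comp continuous_ofReal).norm).bddAbove.mono ?_
    rintro _ ⟨z, hz, rfl⟩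
    exact ⟨z.re, hz, (hre z).symm⟩
  have hedge (x : ℝ) : ∀ z ∈ re ⁻¹' {x}, ‖f z‖ ≤ ‖f x‖ := by
    rintro z rfl
    exact (hre z).le
  have h := norm_le_interp_of_mem_verticalClosedStrip' (f := f) (z := 1 / 2) zero_lt_one
    (by norm_num [verticalClosedStrip]) hf.diffContOnCl hbdd (hedge 0) (hedge 1)
  norm_num at h
  rw [← Real.mul_rpow (norm_nonneg _) (norm_nonneg _), ← Real.sqrt_eq_rpow] at h
  exact (Real.le_sqrt (norm_nonneg _) (by positivity)).mp h

def WithSeminorm {E : Type*} [AddCommGroup E] [Module ℂ E] (_p : Seminorm ℂ E) : Type _ := E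

namespace WithSeminorm

variable {E : Type*} [AddCommGroup E] [Module ℂ E] (p : Seminorm ℂ E)

instance : SeminormedAddCommGroup (WithSeminorm p) :=
  p.toAddGroupSeminorm.toSeminormedAddCommGroup

instance : Module ℂ (WithSeminorm p) := inferInstanceAs (Module ℂ E)

instance : NormedSpace ℂ (WithSeminorm p) where
  norm_smul_le c x := (map_smul_eq_mul p c x).le

end WithSeminorm

-- The three-lines theorem needs a normed space, hence the passage to the Hausdorff quotient.
def Seminorm.toSeparationQuotient {E : Type*} [AddCommGroup E] [Module ℂ E] (p : Seminorm ℂ E) :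
    E →ₗ[ℂ] SeparationQuotient (WithSeminorm p) :=
  (SeparationQuotient.mkCLM ℂ (WithSeminorm p)).toLinearMap ∘ₗ
    (LinearMap.id : E →ₗ[ℂ] WithSeminorm p)

theorem Seminorm.norm_toSeparationQuotient {E : Type*} [AddCommGroup E] [Module ℂ E]
    (p : Seminorm ℂ E) (x : E) : ‖p.toSeparationQuotient x‖ = p x :=
  SeparationQuotient.norm_mk (E := WithSeminorm p) x

open Matrix Unitary
open scoped ComplexOrder

namespace Matrix.PosDef

variable {ι : Type*} [Fintype ι] [DecidableEq ι] {P : Matrix ι ι ℂ} (hP : P.PosDef)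

noncomputable def cpow (z : ℂ) : Matrix ι ι ℂ :=
  conjStarAlgAut ℂ _ hP.isHermitian.eigenvectorUnitary
    (diagonal fun i => (hP.isHermitian.eigenvalues i : ℂ) ^ z)

theorem cfc_rpow_eq_cpow (r : ℝ) : cfc (fun x : ℝ => x ^ r) P = hP.cpow r := by
  rw [hP.isHermitian.cfc_eq, IsHermitian.cfc, cpow]
  congr with i
  simp [Complex.ofReal_cpow (hP.eigenvalues_pos i).le]

theorem ofReal_eigenvalues_ne_zero (i : ι) : (hP.isHermitian.eigenvalues i : ℂ) ≠ 0 :=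
  Complex.ofReal_ne_zero.2 (hP.eigenvalues_pos i).ne'

theorem cpow_add (z w : ℂ) : hP.cpow (z + w) = hP.cpow z * hP.cpow w := by
  simp only [cpow, ← map_mul, diagonal_mul_diagonal,
    Complex.cpow_add _ _ (hP.ofReal_eigenvalues_ne_zero _)]

theorem cpow_zero : hP.cpow 0 = 1 := by
  simp [cpow]

theorem cpow_one : hP.cpow 1 = P := by
  conv_rhs => rw [hP.isHermitian.spectral_theorem]
  simp [cpow, Function.comp_def]

theorem conjTranspose_cpow (z : ℂ) : (hP.cpow z)ᴴ = hP.cpow (starRingEnd ℂ z) := by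
  rw [← star_eq_conjTranspose, cpow, cpow, ← map_star, star_eq_conjTranspose,
    diagonal_conjTranspose]
  congr with i
  have harg : (hP.isHermitian.eigenvalues i : ℂ).arg ≠ Real.pi := by
    rw [Complex.arg_ofReal_of_nonneg (hP.eigenvalues_pos i).le]
    exact Real.pi_pos.ne
  simp [Complex.cpow_conj _ _ harg]

theorem cpow_mem_unitaryGroup {z : ℂ} (hz : z.re = 0) : hP.cpow z ∈ unitaryGroup ι ℂ := by
  have hD : (diagonal fun i => (hP.isHermitian.eigenvalues i : ℂ) ^ z) ∈ unitaryGroup ι ℂ := by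
    rw [mem_unitaryGroup_iff', star_eq_conjTranspose, diagonal_conjTranspose,
      diagonal_mul_diagonal, ← diagonal_one]
    congr with i
    simp [Complex.conj_mul', Complex.norm_cpow_eq_rpow_re_of_pos (hP.eigenvalues_pos i), hz]
  exact mul_mem (mul_mem (SetLike.coe_mem _) hD) (star_mem (SetLike.coe_mem _))

theorem cpow_eq_sum (z : ℂ) : hP.cpow z = ∑ i, (hP.isHermitian.eigenvalues i : ℂ) ^ z •
    conjStarAlgAut ℂ _ hP.isHermitian.eigenvectorUnitary (single i i 1) := by
  simp only [cpow, ← sum_single_eq_diagonal, map_sum, ← map_smul, smul_single, smul_eq_mul,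
    mul_one]

theorem exists_mem_unitaryGroup_eq_mul_cpow_half {A : Matrix ι ι ℂ} (hA : (Aᴴ * A).PosDef) :
    ∃ W ∈ unitaryGroup ι ℂ, A = W * hA.cpow (1 / 2) := by
  have hstar : (hA.cpow (-(1 / 2)))ᴴ = hA.cpow (-(1 / 2)) := by
    simp [conjTranspose_cpow, map_ofNat]
  refine ⟨A * hA.cpow (-(1 / 2)), ?_, ?_⟩
  · rw [mem_unitaryGroup_iff', star_eq_conjTranspose, conjTranspose_mul, hstar]
    calc hA.cpow (-(1 / 2)) * Aᴴ * (A * hA.cpow (-(1 / 2)))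
        = hA.cpow (-(1 / 2)) * hA.cpow 1 * hA.cpow (-(1 / 2)) := by
          simp only [cpow_one, Matrix.mul_assoc]
      _ = 1 := by rw [← cpow_add, ← cpow_add, ← cpow_zero hA]; norm_num
  · rw [Matrix.mul_assoc, ← cpow_add, neg_add_cancel, cpow_zero, Matrix.mul_one]

end Matrix.PosDef

namespace Matrix

variable {ι : Type*} [Fintype ι] [DecidableEq ι] {P Q : Matrix ι ι ℂ} (hP : P.PosDef)
  (hQ : Q.PosDef) {p : Seminorm ℂ (Matrix ι ι ℂ)}
  (hp : ∀ U V C, U ∈ unitaryGroup ι ℂ → V ∈ unitaryGroup ι ℂ → p (U * C * V) = p C)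

open Complex in
include hp in
theorem seminorm_cpow_mul_mul_cpow (X : Matrix ι ι ℂ) (z w : ℂ) :
    p (hP.cpow z * X * hQ.cpow w) = p (hP.cpow z.re * X * hQ.cpow w.re) := by
  have hz : z = z.im * I + z.re := by rw [add_comm, Complex.re_add_im]
  have hw : w = w.re + w.im * I := (Complex.re_add_im w).symm
  calc p (hP.cpow z * X * hQ.cpow w)
      = p (hP.cpow (z.im * I) * (hP.cpow z.re * X * hQ.cpow w.re) * hQ.cpow (w.im * I)) := by
        conv_lhs => rw [hz, hw, hP.cpow_add, hQ.cpow_add]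
        simp only [Matrix.mul_assoc]
    _ = p (hP.cpow z.re * X * hQ.cpow w.re) :=
        hp _ _ _ (hP.cpow_mem_unitaryGroup (by simp)) (hQ.cpow_mem_unitaryGroup (by simp))

include hp in
theorem sq_seminorm_cpow_half_mul_mul_cpow_half_le (X : Matrix ι ι ℂ) {m n s t : ℝ}
    (hmn : m + n = 1) (hst : s + t = 1) :
    p (hP.cpow (1 / 2) * X * hQ.cpow (1 / 2)) ^ 2 ≤
      p (hP.cpow m * X * hQ.cpow s) * p (hP.cpow n * X * hQ.cpow t) := by
  let g : ℂ → SeparationQuotient (WithSeminorm p) := fun z =>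
    p.toSeparationQuotient (hP.cpow (m + z * (n - m)) * X * hQ.cpow (s + z * (t - s)))
  have hg : Differentiable ℂ g := by
    simp only [g, PosDef.cpow_eq_sum, Finset.sum_mul, Finset.mul_sum, smul_mul_assoc,
      mul_smul_comm, map_sum, map_smul]
    fun_prop (disch := first
      | exact .inl (hP.ofReal_eigenvalues_ne_zero _) | exact .inl (hQ.ofReal_eigenvalues_ne_zero _))
  have hre (z : ℂ) : ‖g z‖ = ‖g z.re‖ := by
    simp only [g, Seminorm.norm_toSeparationQuotient]
    rw [seminorm_cpow_mul_mul_cpow hP hQ hp, seminorm_cpow_mul_mul_cpow hP hQ hp X (m + _ * _)]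
    simp
  have h := norm_sq_half_le_of_norm_eq_norm_re hg hre
  have hmn' : (m : ℂ) + 1 / 2 * (n - m) = 1 / 2 := by
    linear_combination (1 / 2 : ℂ) * (by exact_mod_cast hmn : (m : ℂ) + n = 1)
  have hst' : (s : ℂ) + 1 / 2 * (t - s) = 1 / 2 := by
    linear_combination (1 / 2 : ℂ) * (by exact_mod_cast hst : (s : ℂ) + t = 1)
  simpa only [g, Seminorm.norm_toSeparationQuotient, hmn', hst', zero_mul, add_zero, one_mul,
    add_sub_cancel] using h

end Matrix

theorem stmt_4_general {d : ℕ} (A B X : Matrix (Fin d) (Fin d) ℂ)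
    (hA : IsUnit A) (hB : IsUnit B)
    (m n s t : ℝ) (hmn : m + n = 1) (hst : s + t = 1)
    (N : Matrix (Fin d) (Fin d) ℂ → ℝ)
    (hN_add : ∀ C D, N (C + D) ≤ N C + N D)
    (hN_smul : ∀ (c : ℂ) C, N (c • C) = ‖c‖ * N C)
    (hN_unitary : ∀ U V C, U ∈ Matrix.unitaryGroup (Fin d) ℂ →
      V ∈ Matrix.unitaryGroup (Fin d) ℂ → N (U * C * V) = N C) :
    N (A * X * Bᴴ) ^ 2 ≤
      N (cfc (fun x : ℝ => x ^ m) (Aᴴ * A) * X * cfc (fun x : ℝ => x ^ s) (Bᴴ * B)) *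
        N (cfc (fun x : ℝ => x ^ n) (Aᴴ * A) * X * cfc (fun x : ℝ => x ^ t) (Bᴴ * B)) := by
  have hP : (Aᴴ * A).PosDef := .conjTranspose_mul_self A (mulVec_injective_iff_isUnit.2 hA)
  have hQ : (Bᴴ * B).PosDef := .conjTranspose_mul_self B (mulVec_injective_iff_isUnit.2 hB)
  obtain ⟨U, hU, hAU⟩ := hP.exists_mem_unitaryGroup_eq_mul_cpow_half
  obtain ⟨V, hV, hBV⟩ := hQ.exists_mem_unitaryGroup_eq_mul_cpow_half
  have hAXB : A * X * Bᴴ = U * (hP.cpow (1 / 2) * X * hQ.cpow (1 / 2)) * star V := by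
    nth_rewrite 1 [hAU, hBV]
    rw [conjTranspose_mul, hQ.conjTranspose_cpow]
    simp [Matrix.mul_assoc, star_eq_conjTranspose, map_ofNat]
  rw [hAXB, hN_unitary _ _ _ hU (star_mem hV)]
  simp only [hP.cfc_rpow_eq_cpow, hQ.cfc_rpow_eq_cpow]
  exact sq_seminorm_cpow_half_mul_mul_cpow_half_le (p := Seminorm.of N hN_add hN_smul) hP hQ
    hN_unitary X hmn hst

/-- **Theorem 3.2.** For `n × n` complex matrices `A, B, X` with `A, B` invertible, real
numbers `m + n = 1`, `s + t = 1`, and any unitarily invariant norm `N`: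
`N(A X B*)² ≤ N((A*A)^m X (B*B)^s) * N((A*A)^n X (B*B)^t)`. -/
theorem stmt_4 {d : ℕ} (A B X : Matrix (Fin d) (Fin d) ℂ)
    (hA : IsUnit A) (hB : IsUnit B)
    (m n s t : ℝ) (hmn : m + n = 1) (hst : s + t = 1)
    (N : Matrix (Fin d) (Fin d) ℂ → ℝ)
    (hN_add : ∀ C D, N (C + D) ≤ N C + N D)
    (hN_smul : ∀ (c : ℂ) C, N (c • C) = ‖c‖ * N C)
    (hN_pos : ∀ C, C ≠ 0 → 0 < N C)
    (hN_unitary : ∀ U V C, U ∈ Matrix.unitaryGroup (Fin d) ℂ →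
      V ∈ Matrix.unitaryGroup (Fin d) ℂ → N (U * C * V) = N C) :
    N (A * X * Bᴴ) ^ 2 ≤
      N (cfc (fun x : ℝ => x ^ m) (Aᴴ * A) * X * cfc (fun x : ℝ => x ^ s) (Bᴴ * B)) *
        N (cfc (fun x : ℝ => x ^ n) (Aᴴ * A) * X * cfc (fun x : ℝ => x ^ t) (Bᴴ * B)) :=
  stmt_4_general A B X hA hB m n s t hmn hst N hN_add hN_smul hN_unitary
end
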